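/- arXiv:math/0602254 — 2 statements merged into one kernel-verified Lean document; each statement's English description precedes it below -/
import Mathlib

section
/- The Borel-Tanner probability mass function sums to one: for 0 < θ < 1 and positive integer r, the sum over x = r, r+1, ... of (r x^{x-r-1}/(x-r)!) θ^{x-r} e^{-θx} equals 1. -/
open Finset
open scoped ENNReal NNReal


lemma BT.alt_rec (n : ℕ) (f : ℕ → ℝ) :
    ∑ k ∈ range (n+2), (-1:ℝ)^k * ((n+1).choose k) * f k
    = ∑ k ∈ range (n+1), (-1:ℝ)^k * (n.choose k) * f k
      - ∑ k ∈ range (n+1), (-1:ℝ)^k * (n.choose k) * f (k+1) := by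
  rw [Finset.sum_range_succ' _ (n+1)]
  have h1 : ∀ k, (-1:ℝ)^(k+1) * ((n+1).choose (k+1)) * f (k+1)
      = (-1)^(k+1) * (n.choose k) * f (k+1) + (-1)^(k+1) * (n.choose (k+1)) * f (k+1) := by
    intro k
    rw [Nat.choose_succ_succ]
    push_cast
    ring
  rw [Finset.sum_congr rfl fun k _ => h1 k, Finset.sum_add_distrib]
  have h2 : ∑ k ∈ range (n+1), (-1:ℝ)^(k+1) * (n.choose (k+1)) * f (k+1)
      = ∑ k ∈ range (n+1), (-1:ℝ)^k * (n.choose k) * f k - f 0 := by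
    rw [Finset.sum_range_succ (fun k => (-1:ℝ)^(k+1) * (n.choose (k+1)) * f (k+1)) n,
      Finset.sum_range_succ' (fun k => (-1:ℝ)^k * (n.choose k) * f k) n]
    simp [Nat.choose_succ_self]
  have h3 : ∑ k ∈ range (n+1), (-1:ℝ)^(k+1) * (n.choose k) * f (k+1)
      = - ∑ k ∈ range (n+1), (-1:ℝ)^k * (n.choose k) * f (k+1) := by
    rw [← Finset.sum_neg_distrib]
    exact Finset.sum_congr rfl fun k _ => by ring
  rw [h2, h3]
  simp
  ring

lemma BT.alt_sum_pow (n : ℕ) : ∀ j : ℕ, j < n → ∀ c : ℝ,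
    ∑ k ∈ range (n+1), (-1:ℝ)^k * (n.choose k) * (c + k)^j = 0 := by
  induction n with
  | zero => intro j hj; omega
  | succ n ih =>
    intro j hj c
    have hrec := BT.alt_rec n (fun k => (c + k)^j)
    rw [show n + 2 = n + 1 + 1 by rfl] at hrec
    rw [hrec, ← Finset.sum_sub_distrib]
    have hterm : ∀ k ∈ range (n+1), (-1:ℝ)^k * (n.choose k) * (c + (k:ℝ))^j
        - (-1:ℝ)^k * (n.choose k) * (c + ((k+1 : ℕ):ℝ))^j
        = ∑ i ∈ range j, -((j.choose i : ℝ) * ((-1:ℝ)^k * (n.choose k) * (c + k)^i)) := by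
      intro k _
      push_cast
      have hexp : (c + ((k:ℝ)+1))^j = ∑ i ∈ range (j+1), (c+(k:ℝ))^i * (j.choose i) := by
        have := add_pow (c + (k:ℝ)) 1 j
        simp only [one_pow, mul_one] at this
        rw [← this]; ring_nf
      rw [hexp, Finset.sum_range_succ, Nat.choose_self, Nat.cast_one, mul_one, mul_add,
        Finset.mul_sum, sub_add_eq_sub_sub, sub_sub_cancel_left, ← Finset.sum_neg_distrib]
      exact Finset.sum_congr rfl fun i _ => by ring
    rw [Finset.sum_congr rfl hterm, Finset.sum_comm]
    apply Finset.sum_eq_zero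
    intro i hi
    rw [Finset.sum_neg_distrib, ← Finset.mul_sum, ih i (by simp at hi; omega) c]
    simp

noncomputable def BT.a (r k : ℕ) : ℝ := r * ((r + k : ℕ) : ℝ) ^ ((k:ℤ) - 1) / k.factorial

lemma BT.a_eq (r k : ℕ) : BT.a r k = r * ((r:ℝ)+k) ^ ((k:ℤ) - 1) / k.factorial := by
  rw [BT.a]; push_cast; ring_nf

lemma BT.a_zero (r : ℕ) (hr : 0 < r) : BT.a r 0 = 1 := by
  have : ((r:ℝ)) ≠ 0 := by positivity
  rw [BT.a_eq]
  simp [mul_inv_cancel₀ this]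

lemma BT.antidiag_term (r : ℕ) (hr : 0 < r) (θ : ℝ) (n k : ℕ) (hk : k ≤ n) :
    BT.a r k * θ^k * ((-(θ * ((r:ℝ)+k)))^(n-k) / (n-k).factorial)
    = (θ^n * r * (-1:ℝ)^n / n.factorial) * ((-1:ℝ)^k * (n.choose k) * (((r:ℝ)+k)) ^ ((n:ℤ)-1)) := by
  have hR : ((r:ℝ)+k) ≠ 0 := by positivity
  have hzp : (((r:ℝ)+k)) ^ ((k:ℤ) - 1) * (((r:ℝ)+k))^(n-k) = (((r:ℝ)+k)) ^ ((n:ℤ)-1) := by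
    rw [← zpow_natCast (((r:ℝ)+k)) (n-k), ← zpow_add₀ hR]
    congr 1
    omega
  have hsgn : (-1:ℝ)^n * (-1:ℝ)^k = (-1:ℝ)^(n-k) := by
    rw [← pow_add, show n + k = (n-k) + 2*k from by omega, pow_add, pow_mul]
    simp
  have hθ : θ^k * θ^(n-k) = θ^n := by rw [← pow_add]; congr 1; omega
  have hfk : (k.factorial : ℝ) ≠ 0 := by positivity
  have hfnk : ((n-k).factorial : ℝ) ≠ 0 := by positivity
  have hfn : (n.factorial : ℝ) ≠ 0 := by positivity
  rw [BT.a_eq, neg_pow, mul_pow, Nat.cast_choose ℝ hk, ← hsgn, ← hzp, ← hθ]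
  field_simp

lemma BT.antidiag_sum (r : ℕ) (hr : 0 < r) (θ : ℝ) (n : ℕ) :
    ∑ k ∈ range (n+1), BT.a r k * θ^k * ((-(θ * ((r:ℝ)+k)))^(n-k) / (n-k).factorial)
    = if n = 0 then 1 else 0 := by
  rcases Nat.eq_zero_or_pos n with hn | hn
  · subst hn; simp [BT.a_zero r hr]
  · rw [if_neg (by omega)]
    rw [Finset.sum_congr rfl fun k hk => BT.antidiag_term r hr θ n k (by simp at hk; omega)]
    rw [← Finset.mul_sum]
    have : ∀ k ∈ range (n+1), (-1:ℝ)^k * (n.choose k) * ((r:ℝ)+k) ^ ((n:ℤ)-1)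
        = (-1:ℝ)^k * (n.choose k) * ((r:ℝ)+k) ^ (n-1) := by
      intro k _
      have hcast : ((n:ℤ)-1) = ((n-1 : ℕ) : ℤ) := by omega
      rw [hcast, zpow_natCast]
    rw [Finset.sum_congr rfl this, BT.alt_sum_pow n (n-1) (by omega) r, mul_zero]

lemma BT.a_nonneg (r k : ℕ) : 0 ≤ BT.a r k := by
  rw [BT.a]
  have h1 : (0:ℝ) ≤ ((r + k : ℕ) : ℝ) := by positivity
  have := zpow_nonneg h1 ((k:ℤ) - 1)
  positivity

lemma BT.a_le (r k : ℕ) (hr : 0 < r) : BT.a r k ≤ Real.exp (r+1) * Real.exp k := by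
  have hr' : (0:ℝ) < r := by positivity
  cases k with
  | zero =>
    rw [BT.a_eq]
    simp [mul_inv_cancel₀ hr'.ne']
    positivity
  | succ m =>
    have hR : (0:ℝ) < (r:ℝ) + (m+1 : ℕ) := by positivity
    rw [BT.a_eq]
    have hz : ((r:ℝ) + ((m+1 : ℕ):ℝ)) ^ (((m+1:ℕ):ℤ) - 1) = ((r:ℝ) + ((m+1:ℕ):ℝ)) ^ (m : ℕ) := by
      rw [show (((m+1:ℕ):ℤ) - 1) = (m : ℤ) by push_cast; ring, zpow_natCast]
    rw [hz]
    set R : ℝ := (r:ℝ) + ((m+1:ℕ):ℝ) with hRdef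
    have key : R ^ (m+1) / (m+1).factorial ≤ Real.exp R := Real.pow_div_factorial_le_exp R hR.le (m+1)
    have h2 : (r:ℝ) * R ^ m / (m+1).factorial ≤ R ^ (m+1) / (m+1).factorial := by
      apply div_le_div_of_nonneg_right ?_ (by positivity) |>.trans_eq rfl
      calc (r:ℝ) * R ^ m ≤ R * R ^ m := by
            apply mul_le_mul_of_nonneg_right ?_ (by positivity)
            rw [hRdef]; push_cast; linarith
        _ = R ^ (m+1) := by ring
    have h3 : Real.exp R ≤ Real.exp (r+1) * Real.exp ((m+1:ℕ)) := by
      rw [← Real.exp_add]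
      apply Real.exp_le_exp.mpr
      rw [hRdef]; push_cast; linarith
    calc (r:ℝ) * R ^ m / (m+1).factorial ≤ R ^ (m+1) / (m+1).factorial := h2
      _ ≤ Real.exp R := key
      _ ≤ _ := h3

lemma BT.exp_tsum (x : ℝ) : ∑' m : ℕ, x^m / m.factorial = Real.exp x := by
  rw [Real.exp_eq_exp_ℝ, NormedSpace.exp_eq_tsum_div]

set_option maxHeartbeats 1000000 in
lemma BT.small_sum (r : ℕ) (hr : 0 < r) (θ : ℝ) (h0 : 0 < θ) (h1 : θ < 1/8) :
    ∑' k : ℕ, BT.a r k * θ^k * Real.exp (-(θ * ((r:ℝ)+k))) = 1 := by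
  set T : ℕ × ℕ → ℝ := fun p => BT.a r p.1 * θ^p.1 * ((-(θ * ((r:ℝ)+p.1)))^p.2 / p.2.factorial)
    with hT
  have habs : ∀ p : ℕ × ℕ, |T p| = BT.a r p.1 * θ^p.1 * ((θ * ((r:ℝ)+p.1))^p.2 / p.2.factorial) := by
    rintro ⟨k, m⟩
    have h2 : (0:ℝ) ≤ θ * ((r:ℝ)+k) := by positivity
    simp only [hT, abs_mul, abs_div, abs_pow, abs_neg, Nat.abs_cast, abs_of_nonneg h2,
      abs_of_nonneg (BT.a_nonneg r k), abs_of_nonneg h0.le]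
  have hrowsum : ∀ k : ℕ, ∑' m : ℕ, |T (k, m)| =
      BT.a r k * θ^k * Real.exp (θ * ((r:ℝ)+k)) := by
    intro k
    simp only [habs]
    rw [tsum_mul_left, BT.exp_tsum]
  have hrow : ∀ k : ℕ, Summable fun m => |T (k, m)| := by
    intro k
    simp only [habs]
    exact (Real.summable_pow_div_factorial _).mul_left _
  -- geometric bound
  set q : ℝ := Real.exp 1 * θ * Real.exp θ with hq
  have hq0 : 0 ≤ q := by positivity
  have hq1 : q < 1 := by
    have h2 : Real.exp 1 * Real.exp θ = Real.exp (1 + θ) := (Real.exp_add 1 θ).symm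
    have h3 : Real.exp (1 + θ) ≤ Real.exp 2 := Real.exp_le_exp.mpr (by linarith)
    have h4 : Real.exp 2 = Real.exp 1 * Real.exp 1 := by rw [← Real.exp_add]; norm_num
    have h5 : Real.exp 1 < 2.7182818286 := Real.exp_one_lt_d9
    have h6 : 0 < Real.exp 1 := Real.exp_pos 1
    nlinarith
  have hcolsummable : Summable fun k : ℕ => ∑' m : ℕ, |T (k, m)| := by
    refine Summable.of_nonneg_of_le (fun k => ?_) (fun k => ?_)
      ((summable_geometric_of_lt_one hq0 hq1).mul_left (Real.exp (r+1) * Real.exp (θ * r)))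
    · rw [hrowsum k]
      have := BT.a_nonneg r k
      positivity
    rw [hrowsum k]
    have e1 : Real.exp (θ * ((r:ℝ)+k)) = Real.exp (θ * r) * Real.exp θ ^ k := by
      rw [← Real.exp_nat_mul, ← Real.exp_add]; ring_nf
    have e2 : BT.a r k ≤ Real.exp (r+1) * Real.exp k := BT.a_le r k hr
    have e3 : Real.exp (k:ℕ) = Real.exp 1 ^ k := by
      rw [← Real.exp_nat_mul]; norm_num
    calc BT.a r k * θ^k * Real.exp (θ * ((r:ℝ)+k))
        ≤ (Real.exp (r+1) * Real.exp 1 ^ k) * θ^k * (Real.exp (θ*r) * Real.exp θ ^ k) := by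
          rw [e1]
          apply mul_le_mul_of_nonneg_right _ (by positivity)
          apply mul_le_mul_of_nonneg_right _ (by positivity)
          rw [← e3]; exact e2
      _ = (Real.exp (r+1) * Real.exp (θ*r)) * q ^ k := by rw [hq, mul_pow, mul_pow]; ring
  have habs_summable : Summable fun p : ℕ × ℕ => |T p| := by
    apply (summable_prod_of_nonneg (fun p => abs_nonneg _)).mpr
    exact ⟨hrow, hcolsummable⟩
  have hTs : Summable T := summable_abs_iff.mp habs_summable
  -- first evaluation
  have hval1 : ∑' p : ℕ × ℕ, T p = ∑' k : ℕ, BT.a r k * θ^k * Real.exp (-(θ * ((r:ℝ)+k))) := by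
    rw [Summable.tsum_prod hTs]
    apply tsum_congr
    intro k
    rw [hT]
    simp only
    rw [tsum_mul_left, BT.exp_tsum]
  -- second evaluation
  have hval2 : ∑' p : ℕ × ℕ, T p = 1 := by
    rw [← Finset.HasAntidiagonal.sigmaAntidiagonalEquivProd.tsum_eq T]
    have hsig : Summable (fun c : (Σ n : ℕ, {p // p ∈ Finset.HasAntidiagonal.antidiagonal n}) =>
        T (Finset.HasAntidiagonal.sigmaAntidiagonalEquivProd c)) :=
      Finset.HasAntidiagonal.sigmaAntidiagonalEquivProd.summable_iff.mpr hTs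
    rw [Summable.tsum_sigma hsig]
    have : ∀ n : ℕ, ∑' (c : {p // p ∈ Finset.HasAntidiagonal.antidiagonal n}),
        T (Finset.HasAntidiagonal.sigmaAntidiagonalEquivProd ⟨n, c⟩) = if n = 0 then 1 else 0 := by
      intro n
      have h1 : ∀ c : {p // p ∈ Finset.HasAntidiagonal.antidiagonal n},
          T (Finset.HasAntidiagonal.sigmaAntidiagonalEquivProd ⟨n, c⟩) = T c.1 := fun c => rfl
      rw [tsum_congr h1, Finset.tsum_subtype (Finset.HasAntidiagonal.antidiagonal n) T,
        Finset.Nat.sum_antidiagonal_eq_sum_range_succ_mk T n]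
      exact BT.antidiag_sum r hr θ n
    rw [tsum_congr this, tsum_ite_eq 0 (fun _ => (1:ℝ))]
  rw [← hval1, hval2]

noncomputable def BT.p (r : ℕ) : FormalMultilinearSeries ℝ ℝ ℝ :=
  FormalMultilinearSeries.ofScalars ℝ (BT.a r)

noncomputable def BT.f (r : ℕ) : ℝ → ℝ := (BT.p r).sum

lemma BT.f_eq (r : ℕ) (z : ℝ) : BT.f r z = ∑' k, BT.a r k * z^k := by
  apply tsum_congr
  intro k
  rw [BT.p, FormalMultilinearSeries.ofScalars_apply_eq, smul_eq_mul]

lemma BT.radius_ge (r : ℕ) (hr : 0 < r) :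
    ENNReal.ofReal (Real.exp 1)⁻¹ ≤ (BT.p r).radius := by
  have hpos : (0:ℝ) ≤ (Real.exp 1)⁻¹ := by positivity
  rw [ENNReal.ofReal_eq_coe_nnreal hpos]
  apply FormalMultilinearSeries.le_radius_of_bound _ (Real.exp (r+1))
  intro n
  have hnorm : ‖(BT.p r) n‖ = BT.a r n := by
    rw [BT.p, FormalMultilinearSeries.ofScalars_norm, Real.norm_eq_abs,
      abs_of_nonneg (BT.a_nonneg r n)]
  rw [hnorm]
  have h1 : BT.a r n ≤ Real.exp (r+1) * Real.exp n := BT.a_le r n hr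
  simp only [NNReal.coe_mk]
  have h3 : Real.exp (n:ℕ) * ((Real.exp 1)⁻¹)^n = 1 := by
    rw [← Real.exp_neg, ← Real.exp_nat_mul, ← Real.exp_add,
      show (n:ℝ) + (n:ℝ)*(-1) = 0 by ring, Real.exp_zero]
  calc BT.a r n * ((Real.exp 1)⁻¹)^n ≤ (Real.exp (r+1) * Real.exp n) * ((Real.exp 1)⁻¹)^n := by
        apply mul_le_mul_of_nonneg_right h1 (by positivity)
    _ = Real.exp (r+1) * (Real.exp n * ((Real.exp 1)⁻¹)^n) := by ring
    _ = Real.exp (r+1) := by rw [h3, mul_one]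

lemma BT.f_analyticAt (r : ℕ) (hr : 0 < r) {z : ℝ} (hz : |z| < (Real.exp 1)⁻¹) :
    AnalyticAt ℝ (BT.f r) z := by
  have hrad : (0:ℝ≥0∞) < (BT.p r).radius :=
    lt_of_lt_of_le (by simp [ENNReal.ofReal_pos]; positivity) (BT.radius_ge r hr)
  have hball := (BT.p r).hasFPowerSeriesOnBall hrad
  have := hball.analyticOnNhd
  apply this
  rw [EMetric.mem_ball, edist_dist, dist_zero_right, Real.norm_eq_abs]
  exact lt_of_lt_of_le (ENNReal.ofReal_lt_ofReal_iff (by positivity) |>.mpr hz)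
    (BT.radius_ge r hr)

lemma BT.sum_shift (r : ℕ) (θ : ℝ) :
    BT.f r (θ * Real.exp (-θ))
    = Real.exp ((r:ℝ)*θ) * ∑' k : ℕ, BT.a r k * θ^k * Real.exp (-(θ * ((r:ℝ)+k))) := by
  rw [BT.f_eq, ← tsum_mul_left]
  apply tsum_congr
  intro k
  have h : Real.exp ((r:ℝ)*θ) * Real.exp (-(θ*((r:ℝ)+k))) = Real.exp ((k:ℕ) * -θ) := by
    rw [← Real.exp_add]; congr 1; ring
  rw [mul_pow, ← Real.exp_nat_mul, ← h]
  ring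

lemma BT.habs_lt (θ : ℝ) (hθ : θ ∈ Set.Ioo (-(1/8):ℝ) 1) :
    |θ * Real.exp (-θ)| < (Real.exp 1)⁻¹ := by
  obtain ⟨hl, hu⟩ := hθ
  have hexp1 : Real.exp 1 < 2.7182818286 := Real.exp_one_lt_d9
  have hpos : (0:ℝ) < Real.exp 1 := Real.exp_pos 1
  rcases le_or_gt 0 θ with h | h
  · rw [abs_of_nonneg (by positivity)]
    have h2 : θ < Real.exp (θ - 1) := by
      have := Real.add_one_lt_exp (x := θ - 1) (by intro hc; rw [sub_eq_zero] at hc; linarith)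
      linarith
    calc θ * Real.exp (-θ) < Real.exp (θ-1) * Real.exp (-θ) :=
          mul_lt_mul_of_pos_right h2 (Real.exp_pos _)
      _ = Real.exp (-1) := by rw [← Real.exp_add]; ring_nf
      _ = (Real.exp 1)⁻¹ := Real.exp_neg 1
  · rw [abs_of_neg (by nlinarith [Real.exp_pos (-θ)])]
    have he : Real.exp (-θ) < Real.exp (1/8) := Real.exp_lt_exp.mpr (by linarith)
    have hrw : -(θ * Real.exp (-θ)) = (-θ) * Real.exp (-θ) := by ring
    rw [hrw]
    have h8 : (-θ) * Real.exp (-θ) < (1/8) * Real.exp (1/8) := by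
      nlinarith [Real.exp_pos (-θ), Real.exp_pos (1/8)]
    have h9 : Real.exp (1/8) * Real.exp 1 < 8 := by
      have e1 : Real.exp (1/8) * Real.exp 1 = Real.exp (9/8) := by
        rw [← Real.exp_add]; norm_num
      have e2 : Real.exp (9/8) < Real.exp 2 := Real.exp_lt_exp.mpr (by norm_num)
      have e3 : Real.exp 2 = Real.exp 1 * Real.exp 1 := by rw [← Real.exp_add]; norm_num
      nlinarith
    have hinv : (1/8) * Real.exp (1/8) < (Real.exp 1)⁻¹ := by
      rw [inv_eq_one_div, lt_div_iff₀ hpos]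
      nlinarith [Real.exp_pos (1/8)]
    linarith

lemma BT.eqOn (r : ℕ) (hr : 0 < r) :
    Set.EqOn (fun t => BT.f r (t * Real.exp (-t))) (fun t => Real.exp ((r:ℝ)*t))
      (Set.Ioo (-(1/8):ℝ) 1) := by
  apply AnalyticOnNhd.eqOn_of_preconnected_of_eventuallyEq
    (𝕜 := ℝ) (z₀ := (1/16 : ℝ))
  · intro t ht
    have hinner : AnalyticAt ℝ (fun t : ℝ => t * Real.exp (-t)) t := by
      apply AnalyticAt.mul analyticAt_id
      have : AnalyticAt ℝ (fun x : ℝ => -x) t := analyticAt_id.neg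
      exact analyticAt_rexp.comp this
    have hcomp := AnalyticAt.comp (g := BT.f r) (f := fun s : ℝ => s * Real.exp (-s)) (x := t)
      (BT.f_analyticAt r hr (BT.habs_lt t ht)) hinner
    exact hcomp
  · intro t _
    have hlin : AnalyticAt ℝ (fun t : ℝ => (r:ℝ) * t) t := analyticAt_const.mul analyticAt_id
    have hcomp := AnalyticAt.comp (g := Real.exp) (f := fun s : ℝ => (r:ℝ) * s) (x := t)
      analyticAt_rexp hlin
    exact hcomp
  · exact isPreconnected_Ioo
  · constructor <;> norm_num
  · have hmem : Set.Ioo (0:ℝ) (1/8) ∈ nhds (1/16 : ℝ) :=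
      isOpen_Ioo.mem_nhds (by constructor <;> norm_num)
    filter_upwards [hmem] with t ht
    show BT.f r (t * Real.exp (-t)) = Real.exp ((r:ℝ)*t)
    rw [BT.sum_shift, BT.small_sum r hr t ht.1 ht.2, mul_one]

/-- The Borel-Tanner pmf sums to one: for `0 < θ < 1` and positive integer `r`,
`∑_{x=r}^∞ (r x^{x-r-1}/(x-r)!) θ^{x-r} e^{-θx} = 1` (indexing `x = r + k`). -/
theorem borel_tanner_sums_to_one (θ : ℝ) (hθ0 : 0 < θ) (hθ1 : θ < 1)
    (r : ℕ) (hr : 0 < r) :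
    ∑' k : ℕ, (r : ℝ) * ((r + k : ℕ) : ℝ) ^ ((k : ℤ) - 1) / (Nat.factorial k) *
      θ ^ k * Real.exp (-θ * ((r + k : ℕ) : ℝ)) = 1 := by
  have hU : θ ∈ Set.Ioo (-(1/8):ℝ) 1 := ⟨by linarith, hθ1⟩
  have hG : BT.f r (θ * Real.exp (-θ)) = Real.exp ((r:ℝ)*θ) := BT.eqOn r hr hU
  have hS : ∑' k : ℕ, BT.a r k * θ^k * Real.exp (-(θ * ((r:ℝ)+k))) = 1 := by
    have h1 := (BT.sum_shift r θ).symm.trans hG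
    have h2 : Real.exp ((r:ℝ)*θ) ≠ 0 := Real.exp_ne_zero _
    field_simp at h1
    exact h1
  rw [← hS]
  apply tsum_congr
  intro k
  rw [BT.a]
  have harg : -θ * ((r + k : ℕ) : ℝ) = -(θ * ((r:ℝ)+k)) := by push_cast; ring
  rw [harg]
end

section
/- Let G be a probability measure on (0,1) and let m_G(x|r) = ∫₀¹ p(x|θ,r) dG(θ) where p(x|θ,r) = a_r(x) θ^{x-r} e^{-θx} and a_r(x) = r x^{x-r-1}/(x-r)!. Then for a positive integer γ, the posterior expectation of e^{-γθ} given observation x satisfies E[e^{-γθ} | x] = (a_r(x)/a_{r+γ}(x+γ)) · m_G(x+γ | r+γ)/m_G(x|r), provided m_G(x|r) > 0. -/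
open MeasureTheory

/-- Borel-Tanner coefficient `a_r(x) = r x^{x-r-1}/(x-r)!` (integer exponent). -/
noncomputable def btCoeff (r x : ℕ) : ℝ :=
  (r : ℝ) * (x : ℝ) ^ ((x : ℤ) - r - 1) / (Nat.factorial (x - r))

/-- Borel-Tanner pmf `p(x|θ,r) = a_r(x) θ^{x-r} e^{-θx}`. -/
noncomputable def btPmf (r x : ℕ) (θ : ℝ) : ℝ :=
  btCoeff r x * θ ^ (x - r) * Real.exp (-θ * x)

lemma btCoeff_ne_zero {r x : ℕ} (hr : 0 < r) (hx0 : 0 < x) : btCoeff r x ≠ 0 := by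
  unfold btCoeff
  have h1 : (r : ℝ) ≠ 0 := Nat.cast_ne_zero.mpr hr.ne'
  have h2 : (x : ℝ) ≠ 0 := Nat.cast_ne_zero.mpr hx0.ne'
  have h3 : ((Nat.factorial (x - r)) : ℝ) ≠ 0 := Nat.cast_ne_zero.mpr (Nat.factorial_ne_zero _)
  positivity

lemma bt_key (r γ x : ℕ) (hr : 0 < r) (hγ : 0 < γ) (θ : ℝ) :
    Real.exp (-(γ : ℝ) * θ) * btPmf r x θ =
      (btCoeff r x / btCoeff (r + γ) (x + γ)) * btPmf (r + γ) (x + γ) θ := by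
  have hc : btCoeff (r + γ) (x + γ) ≠ 0 :=
    btCoeff_ne_zero (by omega) (by omega)
  unfold btPmf
  have hsub : x + γ - (r + γ) = x - r := by omega
  rw [hsub]
  have hexp : Real.exp (-θ * ((x : ℝ) + γ)) = Real.exp (-θ * x) * Real.exp (-(γ : ℝ) * θ) := by
    rw [← Real.exp_add]; ring_nf
  push_cast
  rw [hexp]
  field_simp

/-- The posterior expectation of `e^{-γθ}` given `x` satisfies
`E[e^{-γθ}|x] = (a_r(x)/a_{r+γ}(x+γ)) · m_G(x+γ|r+γ)/m_G(x|r)`. -/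
theorem posterior_exp_formula (G : Measure ℝ) [IsProbabilityMeasure G]
    (hG : ∀ᵐ θ ∂G, θ ∈ Set.Ioo (0 : ℝ) 1)
    (r γ x : ℕ) (hr : 0 < r) (hγ : 0 < γ) (hx : r ≤ x)
    (hm : 0 < ∫ θ, btPmf r x θ ∂G) :
    (∫ θ, Real.exp (-(γ : ℝ) * θ) * btPmf r x θ ∂G) / (∫ θ, btPmf r x θ ∂G) =
      (btCoeff r x / btCoeff (r + γ) (x + γ)) *
        (∫ θ, btPmf (r + γ) (x + γ) θ ∂G) / (∫ θ, btPmf r x θ ∂G) := by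
  have h : (∫ θ, Real.exp (-(γ : ℝ) * θ) * btPmf r x θ ∂G) =
      (btCoeff r x / btCoeff (r + γ) (x + γ)) * ∫ θ, btPmf (r + γ) (x + γ) θ ∂G := by
    rw [← integral_const_mul]
    exact integral_congr_ae (Filter.Eventually.of_forall (bt_key r γ x hr hγ))
  rw [h, mul_div_assoc]
end
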